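/- Let $m : \Delta \to \mathbb{C}$ be a Weyl-group-invariant multiplicity function on a root system $\Delta$ with reduced roots and $m_\alpha \in 2\mathbb{N}$ for all $\alpha$. Then the reciprocal of the Harish-Chandra $c$-function is the polynomial $1/c(m;\lambda) = \prod_{\alpha \in \Delta^+} \prod_{k=0}^{m_\alpha/2 - 1} \frac{\lambda_\alpha + k}{\rho(m)_\alpha + k}$, where $\lambda_\alpha = \tfrac12 \lambda(H_\alpha)$. Equivalently, starting from the Gindikin–Karpelevic product formula $c(m;\lambda) = \kappa_0 \prod_{\alpha \in \Delta^+} \frac{2^{-\lambda_\alpha}\Gamma(\lambda_\alpha)}{\Gamma(\frac12(\lambda_\alpha + m_\alpha/2 + 1))\Gamma(\frac12(\lambda_\alpha + m_\alpha/2))}$ (normalized so $c(m;\rho(m)) = 1$), the Gamma quotients simplify via the duplication formula and $\Gamma(z+1) = z\Gamma(z)$ to this finite product. -/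

import Mathlib

open scoped BigOperators
open Complex Finset

noncomputable section

/-- The Gindikin–Karpelevic factor of the Harish-Chandra `c`-function for a reduced
root system with even multiplicities `m_α = 2 d_α` (so `m_{2α} = 0`):
`∏_{α ∈ Δ⁺} 2^{-μ_α} Γ(μ_α) / (Γ(½(μ_α + m_α/2 + 1)) Γ(½(μ_α + m_α/2)))`,
evaluated at `μ_α`. -/
def cFactor {ι : Type*} (P : Finset ι) (d : ι → ℕ) (mu : ι → ℂ) : ℂ :=
  ∏ α ∈ P, (2 : ℂ) ^ (-(mu α)) * Complex.Gamma (mu α) /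
    (Complex.Gamma ((mu α + (d α : ℂ) + 1) / 2) * Complex.Gamma ((mu α + (d α : ℂ)) / 2))

lemma add_nat_ne_zero (z : ℂ) (hz : 0 < z.re) (k : ℕ) : z + (k : ℂ) ≠ 0 := by
  intro h
  have : (z + (k : ℂ)).re = 0 := by rw [h]; simp
  simp only [Complex.add_re, Complex.natCast_re] at this
  have : (0:ℝ) ≤ (k:ℝ) := Nat.cast_nonneg k
  linarith [Complex.add_re z k, Complex.natCast_re k]

lemma prod_add_ne_zero (z : ℂ) (hz : 0 < z.re) (n : ℕ) :
    (∏ k ∈ Finset.range n, (z + (k : ℂ))) ≠ 0 :=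
  Finset.prod_ne_zero_iff.mpr fun k _ => add_nat_ne_zero z hz k

lemma gamma_add_nat (z : ℂ) (hz : 0 < z.re) (n : ℕ) :
    Complex.Gamma (z + n) = (∏ k ∈ Finset.range n, (z + k)) * Complex.Gamma z := by
  induction n with
  | zero => simp
  | succ n ih =>
    have hne : z + n ≠ 0 := add_nat_ne_zero z hz n
    have : z + (n + 1 : ℕ) = (z + n) + 1 := by push_cast; ring
    rw [this, Complex.Gamma_add_one _ hne, ih, Finset.prod_range_succ]
    ring

lemma two_cpow_ne_zero (w : ℂ) : (2 : ℂ) ^ w ≠ 0 := by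
  intro h
  exact two_ne_zero ((Complex.cpow_eq_zero_iff 2 w).mp h).1

lemma term_eq (z : ℂ) (hz : 0 < z.re) (n : ℕ) :
    (2 : ℂ) ^ (-z) * Complex.Gamma z /
      (Complex.Gamma ((z + n + 1) / 2) * Complex.Gamma ((z + n) / 2))
    = (2 : ℂ) ^ ((n : ℂ) - 1) / (↑(Real.sqrt Real.pi) * ∏ k ∈ Finset.range n, (z + k)) := by
  have hdup := Complex.Gamma_mul_Gamma_add_half ((z + n) / 2)
  have h1 : (z + n) / 2 + 1 / 2 = (z + n + 1) / 2 := by ring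
  have h2 : 2 * ((z + n) / 2) = z + n := by ring
  rw [h1, h2] at hdup
  have hden : Complex.Gamma ((z + n + 1) / 2) * Complex.Gamma ((z + n) / 2)
      = Complex.Gamma (z + n) * (2 : ℂ) ^ (1 - (z + n)) * ↑(Real.sqrt Real.pi) := by
    rw [mul_comm, hdup]
  rw [hden, gamma_add_nat z hz n]
  have hG : Complex.Gamma z ≠ 0 := Complex.Gamma_ne_zero_of_re_pos hz
  have hs : (↑(Real.sqrt Real.pi) : ℂ) ≠ 0 :=
    Complex.ofReal_ne_zero.mpr (Real.sqrt_ne_zero'.mpr Real.pi_pos)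
  have hP : (∏ k ∈ Finset.range n, (z + k)) ≠ 0 := prod_add_ne_zero z hz n
  have hpow : (2 : ℂ) ^ ((n : ℂ) - 1) * (2 : ℂ) ^ (1 - (z + n)) = (2 : ℂ) ^ (-z) := by
    rw [← Complex.cpow_add _ _ two_ne_zero]
    congr 1
    ring
  rw [div_eq_div_iff (mul_ne_zero (mul_ne_zero (mul_ne_zero hP hG) (two_cpow_ne_zero _)) hs)
    (mul_ne_zero hs hP)]
  rw [← hpow]
  ring

/-- In the even multiplicity case (`Δ` reduced, `m_α = 2 d_α ∈ 2ℕ`), the reciprocal of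
the Harish-Chandra `c`-function
`c(m;λ) = κ₀ ∏_{α∈Δ⁺} 2^{-λ_α} Γ(λ_α) / (Γ(½(λ_α+m_α/2+1)) Γ(½(λ_α+m_α/2)))`,
normalized by `κ₀ = cFactor(ρ(m))⁻¹` so that `c(m;ρ(m)) = 1`, is the polynomial
`1/c(m;λ) = ∏_{α∈Δ⁺} ∏_{k=0}^{m_α/2-1} (λ_α + k)/(ρ(m)_α + k)`.
Here `λ_α = ½λ(H_α)` and `ρ(m)_α = ½ρ(m)(H_α)` are abstract parameters attached to the
positive roots, assumed to lie in the right half plane (away from the poles of `Γ`). -/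
theorem one_div_cFunction_eq_polynomial {ι : Type*} (P : Finset ι)
    (d : ι → ℕ) (lam rho : ι → ℂ)
    (hlam : ∀ α ∈ P, 0 < (lam α).re) (hrho : ∀ α ∈ P, 0 < (rho α).re) :
    1 / ((cFactor P d rho)⁻¹ * cFactor P d lam)
      = ∏ α ∈ P, ∏ k ∈ Finset.range (d α), (lam α + (k : ℂ)) / (rho α + (k : ℂ)) := by
  have h1 : cFactor P d rho = ∏ α ∈ P,
      (2 : ℂ) ^ ((d α : ℂ) - 1) / (↑(Real.sqrt Real.pi) * ∏ k ∈ Finset.range (d α), (rho α + k)) :=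
    Finset.prod_congr rfl fun α hα => term_eq _ (hrho α hα) _
  have h2 : cFactor P d lam = ∏ α ∈ P,
      (2 : ℂ) ^ ((d α : ℂ) - 1) / (↑(Real.sqrt Real.pi) * ∏ k ∈ Finset.range (d α), (lam α + k)) :=
    Finset.prod_congr rfl fun α hα => term_eq _ (hlam α hα) _
  rw [h1, h2, one_div, mul_inv, inv_inv, ← div_eq_mul_inv, ← Finset.prod_div_distrib]
  refine Finset.prod_congr rfl fun α hα => ?_
  have hs : (↑(Real.sqrt Real.pi) : ℂ) ≠ 0 :=
    Complex.ofReal_ne_zero.mpr (Real.sqrt_ne_zero'.mpr Real.pi_pos)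
  have hPr : (∏ k ∈ Finset.range (d α), (rho α + k)) ≠ 0 := prod_add_ne_zero _ (hrho α hα) _
  have hPl : (∏ k ∈ Finset.range (d α), (lam α + k)) ≠ 0 := prod_add_ne_zero _ (hlam α hα) _
  have hC : (2 : ℂ) ^ ((d α : ℂ) - 1) ≠ 0 := two_cpow_ne_zero _
  rw [Finset.prod_div_distrib]
  field_simp
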